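/- Let L and L′ be complex Lie algebras admitting bases e₁,…,e₅ and f₁,…,f₅ respectively, whose only nonzero brackets among basis vectors (up to antisymmetry) are: in L: [e₂,e₄]=e₁, [e₃,e₄]=e₂, [e₂,e₅]=e₁, [e₃,e₅]=e₂; in L′: [f₃,f₅]=f₂, [f₄,f₅]=f₃. Then L and L′ are isomorphic as Lie algebras over ℂ. -/

import Mathlib

/-- `Realizes L c` means that the complex Lie algebra `L` admits a basis `e₁, …, e₅`
(indexed by `Fin 5`) in which the brackets of basis vectors are given by the
structure constants `c`, i.e. `⁅eᵢ, eⱼ⁆ = ∑ₖ c i j k • eₖ` for all `i < j`,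
all brackets of basis vectors being determined by these via antisymmetry. -/
def Realizes (L : Type) [LieRing L] [LieAlgebra ℂ L]
    (c : Fin 5 → Fin 5 → Fin 5 → ℂ) : Prop :=
  ∃ e : Module.Basis (Fin 5) ℂ L, ∀ i j : Fin 5, i < j →
    ⁅e i, e j⁆ = ∑ k, c i j k • e k

/-- The nilpotent pattern `d₆(0:0)`: `[e₂,e₄]=e₁`, `[e₃,e₄]=e₂`, `[e₂,e₅]=e₁`, `[e₃,e₅]=e₂`. -/
def patternL : Fin 5 → Fin 5 → Fin 5 → ℂ := fun i j =>
  if i = 1 ∧ j = 3 then ![1, 0, 0, 0, 0]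
  else if i = 2 ∧ j = 3 then ![0, 1, 0, 0, 0]
  else if i = 1 ∧ j = 4 then ![1, 0, 0, 0, 0]
  else if i = 2 ∧ j = 4 then ![0, 1, 0, 0, 0]
  else 0

/-- The nilpotent pattern `d₂₁(0:0:0)`: `[f₃,f₅]=f₂`, `[f₄,f₅]=f₃`. -/
def patternL' : Fin 5 → Fin 5 → Fin 5 → ℂ := fun i j =>
  if i = 2 ∧ j = 4 then ![0, 1, 0, 0, 0]
  else if i = 3 ∧ j = 4 then ![0, 0, 1, 0, 0]
  else 0

/-! Since `f₁` is central in `d₂₁(0:0:0)`, the vector `f₁ + f₅` has the same brackets as `f₅`, and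
in the basis `f₂, f₃, f₄, f₅, f₁ + f₅` the algebra has exactly the bracket table of `d₆(0:0)`.
Two Lie algebras realizing the same structure constants are isomorphic via the linear map
matching the two bases. -/

section

variable {R ι L L' : Type*} [CommRing R] [LieRing L] [LieAlgebra R L] [LieRing L']
  [LieAlgebra R L']

theorem LinearMap.map_lie_of_basis (b : Module.Basis ι R L) (φ : L →ₗ[R] L')
    (h : ∀ i j, φ ⁅b i, b j⁆ = ⁅φ (b i), φ (b j)⁆) (x y : L) : φ ⁅x, y⁆ = ⁅φ x, φ y⁆ := by
  have := LinearMap.ext_basis (B := (LieModule.toEnd R L L : L →ₗ[R] Module.End R L).compr₂ φ)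
    (B' := (LieModule.toEnd R L' L' : L' →ₗ[R] Module.End R L').compl₁₂ φ φ) b b (by simpa using h)
  simpa using LinearMap.congr_fun₂ this x y

theorem LinearMap.map_lie_of_basis_of_lt [LinearOrder ι] (b : Module.Basis ι R L)
    (φ : L →ₗ[R] L') (h : ∀ i j, i < j → φ ⁅b i, b j⁆ = ⁅φ (b i), φ (b j)⁆) (x y : L) :
    φ ⁅x, y⁆ = ⁅φ x, φ y⁆ := by
  refine φ.map_lie_of_basis b (fun i j ↦ ?_) x y
  rcases lt_trichotomy i j with hij | rfl | hij
  · exact h i j hij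
  · simp
  · rw [← lie_skew, map_neg, h j i hij, lie_skew]

end

theorem Realizes.nonempty_lieEquiv {L L' : Type} [LieRing L] [LieAlgebra ℂ L] [LieRing L']
    [LieAlgebra ℂ L'] {c : Fin 5 → Fin 5 → Fin 5 → ℂ} (hL : Realizes L c) (hL' : Realizes L' c) :
    Nonempty (L ≃ₗ⁅ℂ⁆ L') := by
  obtain ⟨e, he⟩ := hL
  obtain ⟨f, hf⟩ := hL'
  let φ := e.equiv f (Equiv.refl _)
  have hφ : ∀ i j, i < j → φ ⁅e i, e j⁆ = ⁅φ (e i), φ (e j)⁆ := fun i j hij ↦ by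
    simp [φ, he i j hij, hf i j hij]
  exact ⟨{ φ with map_lie' := φ.toLinearMap.map_lie_of_basis_of_lt e hφ _ _ }⟩

theorem Realizes.patternL_of_patternL' {L : Type} [LieRing L] [LieAlgebra ℂ L]
    (h : Realizes L patternL') : Realizes L patternL := by
  obtain ⟨f, hf⟩ := h
  have hf' : ∀ i j, j < i → ⁅f i, f j⁆ = -∑ k, patternL' j i k • f k := fun i j hji ↦ by
    rw [← hf j i hji, lie_skew]
  let g : Fin 5 → L := ![f 1, f 2, f 3, f 4, f 0 + f 4]
  have hg : ⊤ ≤ Submodule.span ℂ (Set.range g) := by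
    rw [← f.span_eq, Submodule.span_le]
    rintro _ ⟨i, rfl⟩
    have mem (k : Fin 5) : g k ∈ Submodule.span ℂ (Set.range g) := Submodule.subset_span ⟨k, rfl⟩
    fin_cases i
    · simpa [g] using sub_mem (mem 4) (mem 3)
    exacts [mem 0, mem 1, mem 2, mem 3]
  refine ⟨basisOfTopLeSpanOfCardEqFinrank g hg (by simp [Module.finrank_eq_card_basis f]),
    fun i j hij ↦ ?_⟩
  simp only [coe_basisOfTopLeSpanOfCardEqFinrank]
  fin_cases i <;> fin_cases j <;> first
    | exact absurd hij (by decide)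
    | simp [g, lie_add, hf, hf', patternL, patternL', Fin.sum_univ_five]


/-- The nilpotent algebras `d₆(0:0)` and `d₂₁(0:0:0)` are isomorphic. -/
theorem d6_d21_generic_iso
    (L L' : Type) [LieRing L] [LieAlgebra ℂ L] [LieRing L'] [LieAlgebra ℂ L']
    (hL : Realizes L patternL) (hL' : Realizes L' patternL') :
    Nonempty (L ≃ₗ⁅ℂ⁆ L') :=
  hL.nonempty_lieEquiv hL'.patternL_of_patternL'
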